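/- Let B be a finite simple graph. Call an unordered pair of distinct vertices {u,v} a 2-vertex-cut if B − u − v is disconnected, and for such a pair let m(u,v) denote the minimum number of vertices in a connected component of B − u − v. Suppose B has at least one 2-vertex-cut, that {u,v} is a 2-vertex-cut minimizing m(u,v) over all 2-vertex-cuts, that B₁ is a connected component of B − u − v with exactly m(u,v) vertices, and that u has exactly one neighbour in B₁. Then B₁ consists of a single vertex. -/

import Mathlib

/-!
If the component `B₁` had a second vertex, let `w` be the unique neighbour of `u` in it.
Then `B₁ - w` is nonempty and no edge of `B - w - v` leaves it (the only edge from `B₁` to `u`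
ends at `w`), while `B - u - v` has vertices outside `B₁`. So `{w, v}` is a 2-vertex-cut
with a component of order at most `|B₁| - 1 < m(u, v)`, contradicting minimality.
-/

/-- `{u, v}` is a 2-vertex-cut of `B`: `u ≠ v` and `B - u - v` is disconnected. -/
def IsTwoVertexCut {V : Type*} (B : SimpleGraph V) (u v : V) : Prop :=
  u ≠ v ∧ ¬ (B.induce (({u, v} : Set V)ᶜ)).Preconnected

/-- `m(u,v)`: the minimum number of vertices of a connected component of `B - u - v`. -/
noncomputable def minCompCard {V : Type*} (B : SimpleGraph V) (u v : V) : ℕ :=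
  sInf {n : ℕ | ∃ c : (B.induce (({u, v} : Set V)ᶜ)).ConnectedComponent, n = c.supp.ncard}

namespace SimpleGraph

variable {V : Type*} {G : SimpleGraph V}

theorem ConnectedComponent.exists_notMem_supp_of_not_preconnected (hG : ¬G.Preconnected)
    (c : G.ConnectedComponent) : ∃ y, y ∉ c.supp := by
  by_contra! hall
  exact hG fun a b => ConnectedComponent.exact ((hall a).trans (hall b).symm)

def AdjClosedWithin (G : SimpleGraph V) (s S : Set V) : Prop :=
  ∀ ⦃z z'⦄, z ∈ S → z' ∈ s → G.Adj z z' → z' ∈ S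

namespace AdjClosedWithin

variable {s S : Set V}

theorem mem_of_reachable (hS : G.AdjClosedWithin s S) {a b : s}
    (hab : (G.induce s).Reachable a b) (ha : (a : V) ∈ S) : (b : V) ∈ S := by
  obtain ⟨p⟩ := hab
  induction p with
  | nil => exact ha
  | cons hadj _ ih => exact ih (hS ha (Subtype.property _) (by simpa using hadj))

theorem not_preconnected (hS : G.AdjClosedWithin s S) {a b : s} (ha : (a : V) ∈ S)
    (hb : (b : V) ∉ S) : ¬(G.induce s).Preconnected :=
  fun h => hb (hS.mem_of_reachable (h a b) ha)

theorem ncard_supp_le [Finite V] (hS : G.AdjClosedWithin s S)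
    {c : (G.induce s).ConnectedComponent} {a : s} (ha : a ∈ c.supp) (haS : (a : V) ∈ S) :
    c.supp.ncard ≤ S.ncard :=
  Set.ncard_le_ncard_of_injOn Subtype.val
    (fun b hb => hS.mem_of_reachable (ConnectedComponent.exact (ha.trans hb.symm)) haS)
    Subtype.val_injective.injOn

end AdjClosedWithin

theorem adjClosedWithin_supp {s : Set V} (c : (G.induce s).ConnectedComponent) :
    G.AdjClosedWithin s (Subtype.val '' c.supp) := by
  rintro _ z' ⟨z, hz, rfl⟩ hz' hadj
  refine ⟨⟨z', hz'⟩, ?_, rfl⟩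
  rw [ConnectedComponent.mem_supp_iff] at hz ⊢
  rw [← hz]
  exact ConnectedComponent.sound (Adj.reachable (by simpa using hadj.symm))

end SimpleGraph

open SimpleGraph

theorem val_mem_compl_pair_of_ne {V : Type*} {u v : V} {z w : (({u, v} : Set V)ᶜ : Set V)}
    (h : z ≠ w) : (z : V) ∈ ({(w : V), v}ᶜ : Set V) := by
  have hz := z.2
  simp only [Set.mem_compl_iff, Set.mem_insert_iff, Set.mem_singleton_iff, not_or] at hz ⊢
  exact ⟨fun h' => h (Subtype.ext h'), hz.2⟩

theorem minCompCard_le {V : Type*} (B : SimpleGraph V) (u v : V)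
    (c : (B.induce (({u, v} : Set V)ᶜ)).ConnectedComponent) :
    minCompCard B u v ≤ c.supp.ncard :=
  Nat.sInf_le ⟨c, rfl⟩

theorem adjClosedWithin_supp_diff_unique_neighbor {V : Type*} {B : SimpleGraph V} {u v : V}
    {c : (B.induce (({u, v} : Set V)ᶜ)).ConnectedComponent} {w : (({u, v} : Set V)ᶜ : Set V)}
    (huw : ∀ x ∈ c.supp, B.Adj u x → x = w) :
    B.AdjClosedWithin ({(w : V), v}ᶜ) (Subtype.val '' c.supp \ {(w : V)}) := by
  rintro z z' ⟨⟨x, hx, rfl⟩, hxw⟩ hz' hadj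
  simp only [Set.mem_compl_iff, Set.mem_insert_iff, Set.mem_singleton_iff, not_or] at hz'
  have hz'u : z' ≠ u := by
    rintro rfl
    exact hxw (congrArg Subtype.val (huw x hx hadj.symm))
  have hz'c := adjClosedWithin_supp c ⟨x, hx, rfl⟩ (by simp [hz'u, hz'.2]) hadj
  exact ⟨hz'c, hz'.1⟩

theorem stmt_10_general (V : Type*) [Fintype V] (B : SimpleGraph V) (u v : V)
    (hcut : IsTwoVertexCut B u v)
    (hmin : ∀ u' v' : V, IsTwoVertexCut B u' v' → minCompCard B u v ≤ minCompCard B u' v')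
    (c₁ : (B.induce (({u, v} : Set V)ᶜ)).ConnectedComponent)
    (hc₁ : c₁.supp.ncard = minCompCard B u v)
    (hone : ({x : (({u, v} : Set V)ᶜ : Set V) | x ∈ c₁.supp ∧ B.Adj u ↑x}).ncard = 1) :
    c₁.supp.ncard = 1 := by
  by_contra hne
  obtain ⟨w, hw⟩ := Set.ncard_eq_one.mp hone
  have hwc : w ∈ c₁.supp := (hw.symm.subset rfl).1
  have huw : ∀ x ∈ c₁.supp, B.Adj u x → x = w := fun x hx hadj => hw.subset ⟨hx, hadj⟩
  obtain ⟨x, hxc, hxw⟩ := Set.exists_ne_of_one_lt_ncard (s := c₁.supp)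
    (by have := (Set.ncard_pos (Set.toFinite _)).mpr ⟨w, hwc⟩; omega) w
  obtain ⟨y, hyc⟩ := c₁.exists_notMem_supp_of_not_preconnected hcut.2
  set S := Subtype.val '' c₁.supp \ {(w : V)}
  have hS : B.AdjClosedWithin ({(w : V), v}ᶜ) S :=
    adjClosedWithin_supp_diff_unique_neighbor huw
  have hxS : (x : V) ∈ S := ⟨⟨x, hxc, rfl⟩, fun h => hxw (Subtype.ext h)⟩
  have hyS : (y : V) ∉ S := fun ⟨⟨y', hy', hyy'⟩, _⟩ => hyc (Subtype.ext hyy' ▸ hy')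
  have hx := val_mem_compl_pair_of_ne hxw
  have hy := val_mem_compl_pair_of_ne (z := y) fun h => hyc (h ▸ hwc)
  have hcut' : IsTwoVertexCut B w v :=
    ⟨fun h => w.2 (by simp [h]), hS.not_preconnected (a := ⟨x, hx⟩) (b := ⟨y, hy⟩) hxS hyS⟩
  have hSc : S.ncard < c₁.supp.ncard := by
    rw [← Set.ncard_image_of_injective _ Subtype.val_injective]
    exact Set.ncard_sdiff_singleton_lt_of_mem ⟨w, hwc, rfl⟩
  have hxcomp := hS.ncard_supp_le (c := (B.induce _).connectedComponentMk ⟨x, hx⟩) rfl hxS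
  have hwv := minCompCard_le B w v ((B.induce _).connectedComponentMk ⟨x, hx⟩)
  have huv := hmin _ _ hcut'
  omega

/-- Suppose `{u,v}` is a 2-vertex-cut of the finite simple graph `B` minimizing the
order of the smallest component of `B - u - v`, that `B₁` is a connected component of
`B - u - v` with exactly `m(u,v)` vertices, and that `u` has exactly one neighbour in
`B₁`.  Then `B₁` consists of a single vertex. -/
theorem stmt_10 (V : Type*) [Fintype V] [DecidableEq V] (B : SimpleGraph V) (u v : V)
    (hcut : IsTwoVertexCut B u v)
    (hmin : ∀ u' v' : V, IsTwoVertexCut B u' v' → minCompCard B u v ≤ minCompCard B u' v')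
    (c₁ : (B.induce (({u, v} : Set V)ᶜ)).ConnectedComponent)
    (hc₁ : c₁.supp.ncard = minCompCard B u v)
    (hone : ({x : (({u, v} : Set V)ᶜ : Set V) | x ∈ c₁.supp ∧ B.Adj u ↑x}).ncard = 1) :
    c₁.supp.ncard = 1 :=
  stmt_10_general V B u v hcut hmin c₁ hc₁ hone
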